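/- arXiv:math/0508005 — 11 statements merged into one kernel-verified Lean document; each statement's English description precedes it below -/
import Mathlib

section
/- In a right Bol magma L with neutral element 1, if a, b, c ∈ L satisfy a·b = 1 and c·a = 1, then b = c; in particular, any two-sided inverse is unique. -/
theorem bol_inverse_unique {L : Type*} [Mul L] [One L]
    (hBol : ∀ x y z : L, ((x * y) * z) * y = x * ((y * z) * y))
    (hone : ∀ x : L, 1 * x = x ∧ x * 1 = x)
    (a b c : L) (hab : a * b = 1) (hca : c * a = 1) :
    b = c := by
  have onel : ∀ x : L, 1 * x = x := fun x => (hone x).1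
  have oner : ∀ x : L, x * 1 = x := fun x => (hone x).2
  have h1 : b * a = 1 := by
    have h := hBol c a b
    rw [hca, onel, hab, onel] at h
    rw [hca] at h
    exact h
  have e3 : a * (b * b) = b := by
    have h := hBol a b (b * a)
    rw [hab, h1, onel, onel, oner] at h
    exact h.symm
  have e4 : b * (a * a) = a := by
    have h := hBol b a 1
    rw [oner, oner, h1, onel] at h
    exact h.symm
  have e7 : (b * b) * a = c := by
    have h := hBol c a (b * b)
    rw [hca, onel, e3, h1, oner] at h
    exact h
  have e2 : c * b = b * b := by
    have h := hBol b b a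
    rw [h1, onel, e7] at h
    exact h
  have e6 : (c * b) * (a * a) = 1 := by
    have h := hBol (c * b) a 1
    rw [oner, oner] at h
    rw [← h, e2, e7, hca]
  have h := hBol c b (a * a)
  rw [e6, onel, e4, hab, oner] at h
  exact h
end

section
/- In a right Bol magma L with neutral element 1, if a·b = 1 and c·a = 1, then b·a = 1 (so a has a two-sided inverse). -/
theorem bol_two_sided_inverse {L : Type*} [Mul L] [One L]
    (hBol : ∀ x y z : L, ((x * y) * z) * y = x * ((y * z) * y))
    (hone : ∀ x : L, 1 * x = x ∧ x * 1 = x)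
    (a b c : L) (hab : a * b = 1) (hca : c * a = 1) :
    b * a = 1 := by
  have h := hBol c a b
  rw [hca, hab, (hone b).1, (hone a).1, hca] at h
  exact h
end

section
/- In a right Bol magma L with neutral element, if a has a two-sided inverse a⁻¹, then the left translation map L(a): x ↦ a·x is a bijection of L, with inverse given by the composition R(a) followed by L(a⁻¹) followed by R(a⁻¹), i.e., L(a)⁻¹(x) = (a⁻¹·(x·a))·a⁻¹; that is, for all x, a·((a⁻¹·(x·a))·a⁻¹) = x and (a⁻¹·((a·x)·a))·a⁻¹ = x. -/
theorem bol_left_translation_bijective {L : Type*} [Mul L] [One L]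
    (hBol : ∀ x y z : L, ((x * y) * z) * y = x * ((y * z) * y))
    (hone : ∀ x : L, 1 * x = x ∧ x * 1 = x)
    (a b : L) (hab : a * b = 1) (hba : b * a = 1) :
    Function.Bijective (fun x : L => a * x) ∧
      (∀ x : L, a * ((b * (x * a)) * b) = x) ∧
      (∀ x : L, (b * ((a * x) * a)) * b = x) := by
  have h1 : ∀ x : L, 1 * x = x := fun x => (hone x).1
  have h2 : ∀ x : L, x * 1 = x := fun x => (hone x).2
  -- flexibility on squares
  have hA : ∀ x y : L, (x * y) * y = x * (y * y) := by
    intro x y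
    have := hBol x y 1
    rwa [h2 (x * y), h2 y] at this
  -- (I):  a * ((b*w)*b) = w*b
  have hI : ∀ w : L, a * ((b * w) * b) = w * b := by
    intro w
    have := hBol a b w
    rw [hab, h1 w] at this
    exact this.symm
  -- (II): b * ((a*w)*a) = w*a
  have hII : ∀ w : L, b * ((a * w) * a) = w * a := by
    intro w
    have := hBol b a w
    rw [hba, h1 w] at this
    exact this.symm
  -- a * (b*b) = b
  have habb : a * (b * b) = b := by
    have := hI 1
    rwa [h2 b, h1 b] at this
  -- (III): ((x*a)*b)*a = x*a  (P idempotent)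
  have hIII : ∀ x : L, ((x * a) * b) * a = x * a := by
    intro x
    have := hBol x a b
    rwa [hab, h1 a] at this
  -- left inverse: (((x*a)*b)*b)*a = x
  have hQP : ∀ x : L, (((x * a) * b) * b) * a = x := by
    intro x
    have e1 : (((x * a) * b) * b) * a = ((x * a) * (b * b)) * a := by
      rw [hA (x * a) b]
    have e2 : ((x * a) * (b * b)) * a = x * ((a * (b * b)) * a) := hBol x a (b * b)
    rw [e1, e2, habb, hba, h2]
  -- right inverse property: (x*a)*b = x
  have hRIP : ∀ x : L, (x * a) * b = x := by
    intro x
    have e1 := hQP ((x * a) * b)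
    rw [hIII x] at e1
    rw [← e1, hQP x]
  -- now the three goals
  have goal2 : ∀ x : L, a * ((b * (x * a)) * b) = x := by
    intro x
    rw [hI (x * a), hRIP x]
  have goal3 : ∀ x : L, (b * ((a * x) * a)) * b = x := by
    intro x
    rw [hII x, hRIP x]
  refine ⟨⟨?_, ?_⟩, goal2, goal3⟩
  · intro x y hxy
    simp only at hxy
    have hx := hII x
    have hy := hII y
    rw [hxy] at hx
    rw [hy] at hx
    -- hx : y * a = x * a
    have := hRIP x
    rw [← hx, hRIP y] at this
    exact this.symm
  · intro x
    exact ⟨(b * (x * a)) * b, goal2 x⟩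
end

section
/- In a right Bol magma L with neutral element, if a and b have two-sided inverses, then the left translation L(a·b) is bijective, and the product a·b has a unique right inverse, namely c = (((b⁻¹·a⁻¹)·(b·a))·a⁻¹)·b⁻¹, i.e., (a·b)·c = 1 and c is the unique element with this property. -/
/-- Right inverse property in a right Bol magma: if `y` has a two-sided
inverse `y'`, then `(x*y)*y' = x` for all `x`. -/
lemma bol_rip {L : Type*} [Mul L] [One L]
    (hBol : ∀ x y z : L, ((x * y) * z) * y = x * ((y * z) * y))
    (hone : ∀ x : L, 1 * x = x ∧ x * 1 = x)
    (y y' : L) (h1 : y * y' = 1) (h2 : y' * y = 1) :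
    ∀ x : L, (x * y) * y' = x := by
  have e2 : y * (y' * y') = y' := by
    have h := hBol y y' 1
    rw [h1, (hone 1).1, (hone y').2, (hone y').1] at h
    exact h.symm
  have hF : ∀ x : L, (((x * y) * y') * y') * y = x := by
    intro x
    have e1 : ((x * y) * y') * 1 * y' = (x * y) * ((y' * 1) * y') := hBol (x * y) y' 1
    rw [(hone ((x * y) * y')).2, (hone y').2] at e1
    calc (((x * y) * y') * y') * y = ((x * y) * (y' * y')) * y := by rw [← e1]
      _ = x * ((y * (y' * y')) * y) := hBol x y (y' * y')
      _ = x * (y' * y) := by rw [e2]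
      _ = x := by rw [h2, (hone x).2]
  intro x
  have h := hBol x y y'
  rw [h1, (hone y).1] at h
  calc (x * y) * y' = (((((x * y) * y') * y) * y') * y') * y := (hF _).symm
    _ = (((x * y) * y') * y') * y := by rw [h]
    _ = x := hF x

theorem bol_product_right_inverse {L : Type*} [Mul L] [One L]
    (hBol : ∀ x y z : L, ((x * y) * z) * y = x * ((y * z) * y))
    (hone : ∀ x : L, 1 * x = x ∧ x * 1 = x)
    (a b a' b' : L) (ha : a * a' = 1) (ha' : a' * a = 1)
    (hb : b * b' = 1) (hb' : b' * b = 1) :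
    Function.Bijective (fun x : L => (a * b) * x) ∧
      (a * b) * ((((b' * a') * (b * a)) * a') * b') = 1 ∧
      ∀ c : L, (a * b) * c = 1 → c = (((b' * a') * (b * a)) * a') * b' := by
  -- right inverse properties
  have ripa : ∀ x : L, (x * a) * a' = x := bol_rip hBol hone a a' ha ha'
  have ripa' : ∀ x : L, (x * a') * a = x := bol_rip hBol hone a' a ha' ha
  have ripb : ∀ x : L, (x * b) * b' = x := bol_rip hBol hone b b' hb hb'
  have ripb' : ∀ x : L, (x * b') * b = x := bol_rip hBol hone b' b hb' hb
  -- injectivity of right translations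
  have injRb : ∀ u v : L, u * b = v * b → u = v := by
    intro u v h
    calc u = (u * b) * b' := (ripb u).symm
      _ = (v * b) * b' := by rw [h]
      _ = v := ripb v
  -- injectivity of left translations by a and b
  have injL : ∀ (y y' : L), y * y' = 1 → y' * y = 1 →
      (∀ x : L, (x * y) * y' = x) → ∀ u v : L, y * u = y * v → u = v := by
    intro y y' h1 h2 rip u v h
    have e1 : u * y = y' * ((y * u) * y) := by
      have := hBol y' y u
      rw [h2, (hone u).1] at this
      exact this
    have e2 : v * y = y' * ((y * v) * y) := by
      have := hBol y' y v
      rw [h2, (hone v).1] at this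
      exact this
    have e3 : u * y = v * y := by rw [e1, h, ← e2]
    calc u = (u * y) * y' := (rip u).symm
      _ = (v * y) * y' := by rw [e3]
      _ = v := rip v
  have injLa : ∀ u v : L, a * u = a * v → u = v := injL a a' ha ha' ripa
  have injLb : ∀ u v : L, b * u = b * v → u = v := injL b b' hb hb' ripb
  -- key Bol consequence: ((a*b)*z)*b = a*((b*z)*b)
  have hkey : ∀ z : L, ((a * b) * z) * b = a * ((b * z) * b) := fun z => hBol a b z
  -- injectivity of L_{a*b}
  have hinj : Function.Injective (fun x : L => (a * b) * x) := by
    intro u v h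
    simp only at h
    have h2 : a * ((b * u) * b) = a * ((b * v) * b) := by
      rw [← hkey u, ← hkey v, h]
    have h3 : (b * u) * b = (b * v) * b := injLa _ _ h2
    exact injLb _ _ (injRb _ _ h3)
  -- surjectivity of L_{a*b}
  have hsurj : Function.Surjective (fun x : L => (a * b) * x) := by
    intro t
    set s : L := (a' * ((t * b) * a)) * a' with hs
    refine ⟨(b' * s) * b', ?_⟩
    simp only
    have e1 : b * ((b' * s) * b') = s * b' := by
      have := hBol b b' s
      rw [hb, (hone s).1] at this
      exact this.symm
    have e2 : (b * ((b' * s) * b')) * b = s := by rw [e1, ripb']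
    have e3 : a * s = t * b := by
      have := hBol a a' ((t * b) * a)
      rw [ha, (hone ((t * b) * a)).1] at this
      rw [hs, ← this, ripa]
    apply injRb
    rw [hkey, e2, e3]
  -- the main identity
  have hmain : (a * b) * ((((b' * a') * (b * a)) * a') * b') = 1 := by
    have step1 : ((b' * a') * (b * a)) * a' = b' * ((a' * (b * a)) * a') := hBol b' a' (b * a)
    set u : L := (a' * (b * a)) * a' with hu
    have step2 : (a * b) * ((b' * u) * b') = (((a * b) * b') * u) * b' := (hBol (a * b) b' u).symm
    have step3 : (a * b) * b' = a := ripb a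
    have step4 : a * u = b := by
      have := hBol a a' (b * a)
      rw [ha, (hone (b * a)).1] at this
      rw [hu, ← this, ripa]
    rw [step1, step2, step3, step4, hb]
  refine ⟨⟨hinj, hsurj⟩, hmain, ?_⟩
  intro c hc
  apply hinj
  simp only
  rw [hc, hmain]
end

section
/- In a right Bol magma L with neutral element 1, suppose a·b = 1 and there exist distinct positive integers m, n with b^m = b^n. Then b·a = 1, so a and b are two-sided inverses of each other. -/
/-!
Bol's identity with `y = b`, `z = b^k` lets one peel a factor `b` off `x * b^(k+2)`, so
right multiplication by `b^k` is the `k`-th iterate of right multiplication by `b`. Hence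
`a * b^(k+1) = b^k` when `a * b = 1`: left multiplication by `a` cancels a power of `b`, and
`b^m = b^n` with `m ≠ n` yields `b^(e+1) = 1`. Then `a = a * b^(e+1) = b^e`, and
`b * a = b * b^e = b^(e+1) = 1`.
-/

/-- Magma powers: `a^0 = 1`, `a^(n+1) = a^n * a`. -/
def mpow {L : Type*} [Mul L] [One L] (a : L) : ℕ → L
  | 0 => 1
  | n + 1 => mpow a n * a

section RightBol

variable {L : Type*} [Mul L] [One L]

theorem mpow_eq_iterate_mul_one (b : L) (k : ℕ) : mpow b k = (· * b)^[k] 1 := by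
  induction k with
  | zero => rfl
  | succ k ih => rw [Function.iterate_succ_apply', ← ih, mpow]

theorem mul_mpow_eq_iterate
    (hBol : ∀ x y z : L, ((x * y) * z) * y = x * ((y * z) * y))
    (hone : ∀ x : L, 1 * x = x ∧ x * 1 = x) (b : L) (k : ℕ) (x : L) :
    x * mpow b k = (· * b)^[k] x := by
  induction k using Nat.twoStepInduction generalizing x with
  | zero => exact (hone x).2
  | one => simp only [mpow, (hone b).1, Function.iterate_one]
  | more k ih _ =>
    have hb : b * mpow b k = mpow b (k + 1) := by
      rw [ih, mpow_eq_iterate_mul_one, Function.iterate_succ_apply, (hone b).1]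
    calc x * mpow b (k + 2) = x * ((b * mpow b k) * b) := by rw [hb]; rfl
      _ = ((x * b) * mpow b k) * b := (hBol x b _).symm
      _ = (· * b)^[k + 2] x := by
        rw [ih, Function.iterate_succ_apply', Function.iterate_succ_apply]

theorem mul_mpow_eq_mpow_succ
    (hBol : ∀ x y z : L, ((x * y) * z) * y = x * ((y * z) * y))
    (hone : ∀ x : L, 1 * x = x ∧ x * 1 = x) (b : L) (k : ℕ) :
    b * mpow b k = mpow b (k + 1) := by
  rw [mul_mpow_eq_iterate hBol hone, mpow_eq_iterate_mul_one, Function.iterate_succ_apply,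
    (hone b).1]

theorem mul_mpow_succ_of_mul_eq_one
    (hBol : ∀ x y z : L, ((x * y) * z) * y = x * ((y * z) * y))
    (hone : ∀ x : L, 1 * x = x ∧ x * 1 = x) {a b : L} (hab : a * b = 1) (k : ℕ) :
    a * mpow b (k + 1) = mpow b k := by
  rw [mul_mpow_eq_iterate hBol hone, Function.iterate_succ_apply, hab, mpow_eq_iterate_mul_one]

theorem mpow_add_right_cancel
    (hBol : ∀ x y z : L, ((x * y) * z) * y = x * ((y * z) * y))
    (hone : ∀ x : L, 1 * x = x ∧ x * 1 = x) {a b : L} (hab : a * b = 1) {p q : ℕ} (k : ℕ)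
    (h : mpow b (p + k) = mpow b (q + k)) : mpow b p = mpow b q := by
  induction k with
  | zero => exact h
  | succ k ih =>
    have h' : mpow b (p + k + 1) = mpow b (q + k + 1) := h
    apply ih
    rw [← mul_mpow_succ_of_mul_eq_one hBol hone hab (p + k), h',
      mul_mpow_succ_of_mul_eq_one hBol hone hab]

theorem exists_mpow_succ_eq_one_of_mpow_eq
    (hBol : ∀ x y z : L, ((x * y) * z) * y = x * ((y * z) * y))
    (hone : ∀ x : L, 1 * x = x ∧ x * 1 = x) {a b : L} (hab : a * b = 1) {m n : ℕ}
    (hmn : m ≠ n) (hpow : mpow b m = mpow b n) : ∃ e, mpow b (e + 1) = 1 := by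
  wlog hlt : m < n generalizing m n
  · exact this hmn.symm hpow.symm (by omega)
  refine ⟨n - m - 1, (mpow_add_right_cancel hBol hone hab (p := 0) m ?_).symm⟩
  rwa [Nat.zero_add, Nat.sub_one_add_one (by omega), Nat.sub_add_cancel hlt.le]

end RightBol

theorem bol_torsion_two_sided_general {L : Type*} [Mul L] [One L]
    (hBol : ∀ x y z : L, ((x * y) * z) * y = x * ((y * z) * y))
    (hone : ∀ x : L, 1 * x = x ∧ x * 1 = x)
    (a b : L) (hab : a * b = 1)
    (m n : ℕ) (hmn : m ≠ n)
    (hpow : mpow b m = mpow b n) :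
    b * a = 1 := by
  obtain ⟨e, he⟩ := exists_mpow_succ_eq_one_of_mpow_eq hBol hone hab hmn hpow
  have ha : a = mpow b e := by
    rw [← mul_mpow_succ_of_mul_eq_one hBol hone hab e, he, (hone a).2]
  rw [ha, mul_mpow_eq_mpow_succ hBol hone, he]

theorem bol_torsion_two_sided {L : Type*} [Mul L] [One L]
    (hBol : ∀ x y z : L, ((x * y) * z) * y = x * ((y * z) * y))
    (hone : ∀ x : L, 1 * x = x ∧ x * 1 = x)
    (a b : L) (hab : a * b = 1)
    (m n : ℕ) (hm : 0 < m) (hn : 0 < n) (hmn : m ≠ n)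
    (hpow : mpow b m = mpow b n) :
    b * a = 1 :=
  bol_torsion_two_sided_general hBol hone a b hab m n hmn hpow
end

section
/- Let L be a right Bol magma with neutral element 1, and let J(L) be the set of elements possessing a two-sided inverse. If J(L) is closed under multiplication, then (J(L),·) is a loop: it has neutral element 1 and for all a, b in J(L) the equations a·x = b and y·a = b have unique solutions x, y in J(L). -/
private lemma bolK4 {L : Type*} [Mul L] [One L]
    (hBol : ∀ x y z : L, ((x * y) * z) * y = x * ((y * z) * y))
    (hone : ∀ x : L, 1 * x = x ∧ x * 1 = x)
    {a b : L} (h1 : a * b = 1) (h2 : b * a = 1) (x : L) :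
    ((x * b) * (a * a)) * b = x := by
  have hk2 : b * (a * a) = a := by
    have h := hBol b a 1
    rw [h2, (hone 1).2, (hone a).1, (hone a).2] at h
    exact h.symm
  have h := hBol x b (a * a)
  rw [hk2, h1, (hone x).2] at h
  exact h

private lemma bolCancelR {L : Type*} [Mul L] [One L]
    (hBol : ∀ x y z : L, ((x * y) * z) * y = x * ((y * z) * y))
    (hone : ∀ x : L, 1 * x = x ∧ x * 1 = x)
    {a b : L} (h1 : a * b = 1) (h2 : b * a = 1) {x y : L}
    (h : x * b = y * b) : x = y :=
  calc x = ((x * b) * (a * a)) * b := (bolK4 hBol hone h1 h2 x).symm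
    _ = ((y * b) * (a * a)) * b := by rw [h]
    _ = y := bolK4 hBol hone h1 h2 y

private lemma bolRIP {L : Type*} [Mul L] [One L]
    (hBol : ∀ x y z : L, ((x * y) * z) * y = x * ((y * z) * y))
    (hone : ∀ x : L, 1 * x = x ∧ x * 1 = x)
    {a b : L} (h1 : a * b = 1) (h2 : b * a = 1) (x : L) :
    (x * a) * b = x := by
  apply bolCancelR hBol hone h2 h1
  have h := hBol x a b
  rw [h1, (hone a).1] at h
  exact h

private lemma bolK2 {L : Type*} [Mul L] [One L]
    (hBol : ∀ x y z : L, ((x * y) * z) * y = x * ((y * z) * y))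
    (hone : ∀ x : L, 1 * x = x ∧ x * 1 = x)
    {a b : L} (h1 : a * b = 1) (h2 : b * a = 1) (z : L) :
    b * ((a * z) * a) = z * a := by
  have h := hBol b a z
  rw [h2, (hone z).1] at h
  exact h.symm

theorem bol_invertibles_loop {L : Type*} [Mul L] [One L]
    (hBol : ∀ x y z : L, ((x * y) * z) * y = x * ((y * z) * y))
    (hone : ∀ x : L, 1 * x = x ∧ x * 1 = x)
    (J : Set L) (hJ : J = {a : L | ∃ b : L, a * b = 1 ∧ b * a = 1})
    (hclosed : ∀ a ∈ J, ∀ b ∈ J, a * b ∈ J) :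
    (1 : L) ∈ J ∧
      (∀ a ∈ J, ∀ b ∈ J, ∃! x : L, x ∈ J ∧ a * x = b) ∧
      (∀ a ∈ J, ∀ b ∈ J, ∃! y : L, y ∈ J ∧ y * a = b) := by
  subst hJ
  refine ⟨⟨1, (hone 1).1, (hone 1).1⟩, ?_, ?_⟩
  · -- left division: a * x = b
    rintro a ⟨a', ha1, ha2⟩ b hb
    have hamem : a ∈ {a : L | ∃ b : L, a * b = 1 ∧ b * a = 1} := ⟨a', ha1, ha2⟩
    have ha'mem : a' ∈ {a : L | ∃ b : L, a * b = 1 ∧ b * a = 1} := ⟨a, ha2, ha1⟩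
    have hx0 : a * ((a' * (b * a)) * a') = b := by
      have h := bolK2 hBol hone ha2 ha1 (b * a)
      rwa [bolRIP hBol hone ha1 ha2 b] at h
    refine ⟨(a' * (b * a)) * a', ⟨?_, hx0⟩, ?_⟩
    · exact hclosed _ (hclosed _ ha'mem _ (hclosed _ hb _ hamem)) _ ha'mem
    · rintro y ⟨-, hay⟩
      have h : y * a = ((a' * (b * a)) * a') * a := by
        have hy := bolK2 hBol hone ha1 ha2 y
        have hx := bolK2 hBol hone ha1 ha2 ((a' * (b * a)) * a')
        rw [hay] at hy
        rw [hx0] at hx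
        rw [← hy, ← hx]
      exact bolCancelR hBol hone ha2 ha1 h
  · -- right division: y * a = b
    rintro a ⟨a', ha1, ha2⟩ b hb
    have ha'mem : a' ∈ {a : L | ∃ b : L, a * b = 1 ∧ b * a = 1} := ⟨a, ha2, ha1⟩
    refine ⟨b * a', ⟨hclosed _ hb _ ha'mem, bolRIP hBol hone ha2 ha1 b⟩, ?_⟩
    rintro y ⟨-, hya⟩
    apply bolCancelR hBol hone ha2 ha1
    rw [hya, bolRIP hBol hone ha2 ha1 b]
end

section
/- Let L be a right Bol magma with neutral element 1 such that every element has finite torsion (for every a there exist distinct positive integers m, n with a^m = a^n). Then the set J(L) of two-sided invertible elements is closed under multiplication and forms a Bol loop. -/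
section Aux

variable {L : Type*} [Mul L] [One L]

private lemma mpow_iter (a : L) : ∀ n, mpow a n = (fun t => t * a)^[n] 1 := by
  intro n
  induction n with
  | zero => rfl
  | succ k ih =>
    rw [Function.iterate_succ_apply']
    show mpow a k * a = ((fun t => t * a)^[k] 1) * a
    rw [ih]

private lemma mul_mpow (hBol : ∀ x y z : L, ((x * y) * z) * y = x * ((y * z) * y))
    (hone : ∀ x : L, 1 * x = x ∧ x * 1 = x) (a : L) :
    ∀ n x, x * mpow a n = (fun t => t * a)^[n] x := by
  have H : ∀ n, (∀ x, x * mpow a n = (fun t => t * a)^[n] x) ∧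
      (∀ x, x * mpow a (n + 1) = (fun t => t * a)^[n + 1] x) := by
    intro n
    induction n with
    | zero =>
      constructor
      · intro x; exact (hone x).2
      · intro x
        show x * (mpow a 0 * a) = (fun t => t * a)^[1] x
        show x * (1 * a) = x * a
        rw [(hone a).1]
    | succ k ih =>
      refine ⟨ih.2, ?_⟩
      intro x
      have ha : a * mpow a k = mpow a (k + 1) := by
        rw [ih.1 a, mpow_iter a (k + 1), Function.iterate_succ_apply]
        have : (1 : L) * a = a := (hone a).1
        rw [this]
      have h2 : mpow a (k + 2) = (a * mpow a k) * a := by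
        show mpow a (k + 1) * a = (a * mpow a k) * a
        rw [ha]
      calc x * mpow a (k + 2) = x * ((a * mpow a k) * a) := by rw [h2]
        _ = ((x * a) * mpow a k) * a := (hBol x a (mpow a k)).symm
        _ = ((fun t => t * a)^[k] (x * a)) * a := by rw [ih.1 (x * a)]
        _ = (fun t => t * a)^[k + 2] x := by
            rw [Function.iterate_succ_apply' (fun t => t * a) (k + 1) x,
              Function.iterate_succ_apply (fun t => t * a) k x]
  exact fun n => (H n).1

private lemma pow_eq_one_of_left_inv (hBol : ∀ x y z : L, ((x * y) * z) * y = x * ((y * z) * y))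
    (hone : ∀ x : L, 1 * x = x ∧ x * 1 = x)
    (htor : ∀ a : L, ∃ m n : ℕ, 0 < m ∧ 0 < n ∧ m ≠ n ∧ mpow a m = mpow a n)
    {a s : L} (hs : s * a = 1) :
    ∃ k : ℕ, 0 < k ∧ mpow a k = 1 := by
  have hshift : ∀ p, s * mpow a (p + 1) = mpow a p := by
    intro p
    rw [mul_mpow hBol hone a (p + 1) s, Function.iterate_succ_apply]
    show (fun t => t * a)^[p] (s * a) = mpow a p
    rw [hs, ← mpow_iter]
  have hdec : ∀ p q : ℕ, mpow a (p + 1) = mpow a (q + 1) → mpow a p = mpow a q := by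
    intro p q h
    rw [← hshift p, ← hshift q, h]
  have hdesc : ∀ m k : ℕ, mpow a m = mpow a (m + k) → mpow a k = 1 := by
    intro m
    induction m with
    | zero =>
      intro k h
      rw [Nat.zero_add] at h
      rw [← h]
      rfl
    | succ i ih =>
      intro k h
      apply ih
      apply hdec
      rw [h]
      congr 1
      omega
  obtain ⟨m, n, hm, hn, hmn, heq⟩ := htor a
  rcases Nat.lt_or_ge m n with hlt | hge
  · refine ⟨n - m, by omega, hdesc m (n - m) ?_⟩
    rw [heq]; congr 1; omega
  · have hlt : n < m := by omega
    refine ⟨m - n, by omega, hdesc n (m - n) ?_⟩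
    rw [← heq]; congr 1; omega

private lemma good_inv (hBol : ∀ x y z : L, ((x * y) * z) * y = x * ((y * z) * y))
    (hone : ∀ x : L, 1 * x = x ∧ x * 1 = x)
    (htor : ∀ a : L, ∃ m n : ℕ, 0 < m ∧ 0 < n ∧ m ≠ n ∧ mpow a m = mpow a n)
    {a s : L} (hs : s * a = 1) :
    ∃ b : L, a * b = 1 ∧ b * a = 1 ∧ (∀ x, (x * a) * b = x) ∧ (∀ x, (x * b) * a = x) := by
  obtain ⟨k, hk, hk1⟩ := pow_eq_one_of_left_inv hBol hone htor hs
  obtain ⟨k', rfl⟩ : ∃ k', k = k' + 1 := ⟨k - 1, by omega⟩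
  refine ⟨mpow a k', ?_, ?_, ?_, ?_⟩
  · -- a * a^k' = a^(k'+1) = 1
    rw [mul_mpow hBol hone a k' a]
    have h1 : (1 : L) * a = a := (hone a).1
    calc (fun t => t * a)^[k'] a = (fun t => t * a)^[k'] ((fun t => t * a) 1) := by
          show _ = (fun t => t * a)^[k'] (1 * a); rw [h1]
      _ = (fun t => t * a)^[k' + 1] 1 := (Function.iterate_succ_apply (fun t => t * a) k' 1).symm
      _ = mpow a (k' + 1) := (mpow_iter a (k' + 1)).symm
      _ = 1 := hk1
  · show mpow a (k' + 1) = 1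
    exact hk1
  · intro x
    rw [mul_mpow hBol hone a k' (x * a)]
    have : (fun t => t * a)^[k'] ((fun t => t * a) x) = (fun t => t * a)^[k' + 1] x :=
      (Function.iterate_succ_apply (fun t => t * a) k' x).symm
    rw [show (fun t => t * a) x = x * a from rfl] at this
    rw [this, ← mul_mpow hBol hone a (k' + 1) x, hk1]
    exact (hone x).2
  · intro x
    rw [mul_mpow hBol hone a k' x]
    have : ((fun t => t * a)^[k'] x) * a = (fun t => t * a)^[k' + 1] x :=
      (Function.iterate_succ_apply' (fun t => t * a) k' x).symm
    rw [this, ← mul_mpow hBol hone a (k' + 1) x, hk1]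
    exact (hone x).2

end Aux

theorem torsion_bol_invertibles_bol_loop {L : Type*} [Mul L] [One L]
    (hBol : ∀ x y z : L, ((x * y) * z) * y = x * ((y * z) * y))
    (hone : ∀ x : L, 1 * x = x ∧ x * 1 = x)
    (htor : ∀ a : L, ∃ m n : ℕ, 0 < m ∧ 0 < n ∧ m ≠ n ∧ mpow a m = mpow a n)
    (J : Set L) (hJ : J = {a : L | ∃ b : L, a * b = 1 ∧ b * a = 1}) :
    (∀ a ∈ J, ∀ b ∈ J, a * b ∈ J) ∧
      (1 : L) ∈ J ∧
      (∀ a ∈ J, ∀ b ∈ J, ∃! x : L, x ∈ J ∧ a * x = b) ∧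
      (∀ a ∈ J, ∀ b ∈ J, ∃! y : L, y ∈ J ∧ y * a = b) ∧
      (∀ x ∈ J, ∀ y ∈ J, ∀ z ∈ J, ((x * y) * z) * y = x * ((y * z) * y)) := by
  subst hJ
  -- membership from a one-sided left inverse
  have memL : ∀ {a s : L}, s * a = 1 → a ∈ {a : L | ∃ b : L, a * b = 1 ∧ b * a = 1} := by
    intro a s hs
    obtain ⟨b, h1, h2, _, _⟩ := good_inv hBol hone htor hs
    exact ⟨b, h1, h2⟩
  -- membership from a one-sided right inverse
  have memR : ∀ {a c : L}, a * c = 1 → a ∈ {a : L | ∃ b : L, a * b = 1 ∧ b * a = 1} := by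
    intro a c hc
    obtain ⟨c', h1, h2, h3, _⟩ := good_inv hBol hone htor hc
    -- a = (a*c)*c' = 1*c' = c'
    have ha : a = c' := by
      have := h3 a
      rw [hc, (hone c').1] at this
      exact this.symm
    exact ⟨c, by rw [ha]; exact h2, by rw [ha]; exact h1⟩
  -- good inverse package for members of J
  have pack : ∀ a ∈ {a : L | ∃ b : L, a * b = 1 ∧ b * a = 1},
      ∃ b : L, a * b = 1 ∧ b * a = 1 ∧ (∀ x, (x * a) * b = x) ∧ (∀ x, (x * b) * a = x) := by
    intro a ha
    obtain ⟨b, _, hba⟩ := ha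
    exact good_inv hBol hone htor hba
  -- closure
  have hclo : ∀ a ∈ {a : L | ∃ b : L, a * b = 1 ∧ b * a = 1},
      ∀ b ∈ {a : L | ∃ b : L, a * b = 1 ∧ b * a = 1},
      a * b ∈ {a : L | ∃ b : L, a * b = 1 ∧ b * a = 1} := by
    intro u hu v hv
    obtain ⟨u', hu1, hu2, hu3, hu4⟩ := pack u hu
    obtain ⟨v', hv1, hv2, hv3, hv4⟩ := pack v hv
    set z := (u' * (v * u)) * u' with hz
    have huz : u * z = v := by
      have hb := hBol u u' (v * u)
      rw [hu1, (hone (v * u)).1, hu3 v] at hb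
      exact hb.symm
    have hb2 := hBol (u * v) v' z
    rw [hv3 u, huz, hv1] at hb2
    exact memR hb2.symm
  refine ⟨hclo, ⟨1, (hone 1).1, (hone 1).1⟩, ?_, ?_, fun x _ y _ z _ => hBol x y z⟩
  · -- left division
    intro a ha b hb
    obtain ⟨a', ha1, ha2, ha3, ha4⟩ := pack a ha
    have ha' : a' ∈ {a : L | ∃ b : L, a * b = 1 ∧ b * a = 1} := ⟨a, ha2, ha1⟩
    set x := (a' * (b * a)) * a' with hx
    have hax : a * x = b := by
      have hb2 := hBol a a' (b * a)
      rw [ha1, (hone (b * a)).1, ha3 b] at hb2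
      exact hb2.symm
    have hxJ : x ∈ {a : L | ∃ b : L, a * b = 1 ∧ b * a = 1} :=
      hclo _ (hclo _ ha' _ (hclo _ hb _ ha)) _ ha'
    have Linj : ∀ p q : L, a * p = a * q → p = q := by
      intro p q h
      have key : ∀ w : L, a' * ((a * w) * a) = w * a := by
        intro w
        have hb3 := hBol a' a w
        rw [ha2, (hone w).1] at hb3
        exact hb3.symm
      have h2 : p * a = q * a := by
        rw [← key p, ← key q, h]
      have := congrArg (fun t => t * a') h2
      simpa [ha3 p, ha3 q] using this
    exact ⟨x, ⟨hxJ, hax⟩, fun y hy => Linj y x (by rw [hy.2, hax])⟩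
  · -- right division
    intro a ha b hb
    obtain ⟨a', ha1, ha2, ha3, ha4⟩ := pack a ha
    have ha' : a' ∈ {a : L | ∃ b : L, a * b = 1 ∧ b * a = 1} := ⟨a, ha2, ha1⟩
    refine ⟨b * a', ⟨hclo _ hb _ ha', ha4 b⟩, ?_⟩
    intro y hy
    have : (y * a) * a' = (b * a') * a * a' := by rw [hy.2, ha4 b]
    rw [ha3 y, ha3 (b * a')] at this
    exact this
end

section
/- In a flexible right Bol magma L with neutral element, if a and b have two-sided inverses and c is a right inverse of a·b (i.e., (a·b)·c = 1), then c is also a left inverse: c·(a·b) = 1. Hence a·b has a two-sided inverse. -/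
theorem flexible_bol_right_inverse_is_left {L : Type*} [Mul L] [One L]
    (hBol : ∀ x y z : L, ((x * y) * z) * y = x * ((y * z) * y))
    (hflex : ∀ x y : L, x * (y * x) = (x * y) * x)
    (hone : ∀ x : L, 1 * x = x ∧ x * 1 = x)
    (a b a' b' c : L) (ha : a * a' = 1) (ha' : a' * a = 1)
    (hb : b * b' = 1) (hb' : b' * b = 1)
    (hc : (a * b) * c = 1) :
    c * (a * b) = 1 := by
  -- squares: (x*y)*y = x*(y*y)
  have sq : ∀ x y : L, (x * y) * y = x * (y * y) := by
    intro x y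
    have h := hBol x y 1
    rwa [(hone (x * y)).2, (hone y).2] at h
  -- right division: ((x*y)*(y'*y'))*y = x for a two-sided inverse pair
  have K : ∀ y y' : L, y * y' = 1 → y' * y = 1 → ∀ x : L, ((x * y) * (y' * y')) * y = x := by
    intro y y' h h' x
    have hU : y * (y' * y') = y' := by
      have hs := sq y y'
      rw [h, (hone y').1] at hs
      exact hs.symm
    have hB := hBol x y (y' * y')
    rw [hU, h', (hone x).2] at hB
    exact hB
  -- right inverse property: (x*y)*y' = x
  have RIP : ∀ y y' : L, y * y' = 1 → y' * y = 1 → ∀ x : L, (x * y) * y' = x := by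
    intro y y' h h' x
    have ht : ((x * y) * y') * y = x * y := by
      have hB := hBol x y y'
      rwa [h, (hone y).1] at hB
    have h1 := K y y' h h' ((x * y) * y')
    rw [ht] at h1
    exact h1.symm.trans (K y y' h h' x)
  -- left inverse property on the image of right translation
  have LIPim : ∀ y y' : L, y' * y = 1 → ∀ z : L, y' * (y * (z * y)) = z * y := by
    intro y y' h' z
    have hB := hBol y' y z
    rw [h', (hone z).1, ← hflex y z] at hB
    exact hB.symm
  have r_ab : ∀ x : L, (x * a) * a' = x := RIP a a' ha ha'
  have r_aB : ∀ x : L, (x * a') * a = x := RIP a' a ha' ha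
  have r_bb : ∀ x : L, (x * b) * b' = x := RIP b b' hb hb'
  have r_bB : ∀ x : L, (x * b') * b = x := RIP b' b hb' hb
  -- a * ((b*c)*b) = b
  have h4 : a * ((b * c) * b) = b := by
    have hB := hBol a b c
    rw [hc, (hone b).1] at hB
    exact hB.symm
  -- a' * b = (b*c)*b
  have hab' : a' * b = (b * c) * b := by
    have hz : (((b * c) * b) * a') * a = (b * c) * b := r_aB ((b * c) * b)
    have hL := LIPim a a' ha' (((b * c) * b) * a')
    rw [hz, h4] at hL
    exact hL
  -- b*c = a'
  have hbc : b * c = a' := by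
    have hr := r_bb a'
    rw [hab', r_bb (b * c)] at hr
    exact hr
  -- c = b' * a'
  have hc' : c = b' * a' := by
    have h5 := LIPim b b' hb' (c * b')
    rw [r_bB c, hbc] at h5
    exact h5.symm
  -- b' * (b * a') = a'
  have hba : b' * (b * a') = a' := by
    have h6 := LIPim b b' hb' (a' * b')
    rwa [r_bB a'] at h6
  have hz0 : (b * a') * a = b := r_aB b
  have hca : c * a = b' := by
    rw [hc']
    exact r_aB b'
  have hmain := hBol c a (b * a')
  rw [← hflex a (b * a'), hz0, hca, hba, ha'] at hmain
  exact hmain.symm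
end

section
/- Let R be a finite strongly right alternative ring with unity. Then the set U(R) of units (elements with a two-sided multiplicative inverse) is closed under multiplication and forms a Bol loop under ring multiplication. -/
namespace SRAUnits

variable {R : Type*} [NonAssocRing R]

/-- Right powers: `pw x 0 = 1`, `pw x (n+1) = pw x n * x`. -/
def pw (x : R) : ℕ → R
  | 0 => 1
  | n+1 => pw x n * x

lemma pw_succ (x : R) (n : ℕ) : pw x (n+1) = pw x n * x := rfl

lemma iter_x (x : R) : ∀ n, (fun w => w * x)^[n] x = pw x (n+1)
  | 0 => by simp [pw]
  | n+1 => by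
    rw [Function.iterate_succ_apply', iter_x x n]
    rfl

lemma mul_pw_eq_iter (hBol : ∀ x y z : R, ((x * y) * z) * y = x * ((y * z) * y)) (x : R) :
    ∀ n, ∀ w : R, w * pw x n = (fun w => w * x)^[n] w := by
  have key : ∀ n, (∀ w : R, w * pw x n = (fun w => w * x)^[n] w) ∧
      (∀ w : R, w * pw x (n+1) = (fun w => w * x)^[n+1] w) := by
    intro n
    induction n with
    | zero =>
      constructor
      · intro w; simp [pw]
      · intro w; simp [pw]
    | succ m ih =>
      refine ⟨ih.2, ?_⟩
      intro w
      have hx : x * pw x m = pw x (m+1) := by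
        rw [ih.1 x, iter_x]
      have hrw : pw x (m+2) = (x * pw x m) * x := by rw [hx]; rfl
      rw [hrw, ← hBol w x (pw x m), ih.1 (w * x)]
      rw [Function.iterate_succ_apply (fun w : R => w * x) (m+1) w]
      rw [Function.iterate_succ_apply' (fun w : R => w * x) m ((fun w : R => w * x) w)]
  exact fun n => (key n).1

lemma mul_pw (hBol : ∀ x y z : R, ((x * y) * z) * y = x * ((y * z) * y)) (x : R) (n : ℕ) :
    x * pw x n = pw x (n+1) := by
  rw [mul_pw_eq_iter hBol x n x, iter_x]

lemma lmap_iter_one (hBol : ∀ x y z : R, ((x * y) * z) * y = x * ((y * z) * y)) (x : R) :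
    ∀ n, (fun w => x * w)^[n] 1 = pw x n
  | 0 => rfl
  | n+1 => by
    rw [Function.iterate_succ_apply', lmap_iter_one hBol x n]
    exact mul_pw hBol x n

lemma one_in_iter (hBol : ∀ x y z : R, ((x * y) * z) * y = x * ((y * z) * y))
    {u b : R} (hub : u * b = 1) :
    ∀ k, (fun w => u * w)^[k] ((fun w => b * w)^[k] u * b) = 1
  | 0 => by simpa using hub
  | k+1 => by
    have I1 : ∀ z : R, u * ((b * z) * b) = z * b := by
      intro z
      have h := hBol u b z
      rw [hub, one_mul] at h
      exact h.symm
    rw [Function.iterate_succ_apply' (fun w : R => b * w) k u]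
    rw [Function.iterate_succ_apply (fun w : R => u * w) k _]
    rw [I1 ((fun w : R => b * w)^[k] u)]
    exact one_in_iter hBol hub k

lemma exists_pw_eq_one [Finite R]
    (hBol : ∀ x y z : R, ((x * y) * z) * y = x * ((y * z) * y))
    {u b : R} (hub : u * b = 1) :
    ∃ M : ℕ, 0 < M ∧ pw u M = 1 := by
  obtain ⟨i, j, hij, hF⟩ :=
    Finite.exists_ne_map_eq_of_infinite (fun k : ℕ => (fun w : R => u * w)^[k])
  have main : ∀ i j : ℕ, i < j → (fun w : R => u * w)^[i] = (fun w : R => u * w)^[j] →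
      ∃ M : ℕ, 0 < M ∧ pw u M = 1 := by
    intro i j hlt hEq
    refine ⟨j - i, by omega, ?_⟩
    have h1 : (fun w : R => u * w)^[i] ((fun w : R => b * w)^[i] u * b) = 1 :=
      one_in_iter hBol hub i
    calc pw u (j-i) = (fun w : R => u * w)^[j-i] 1 := (lmap_iter_one hBol u _).symm
      _ = (fun w : R => u * w)^[j-i] ((fun w : R => u * w)^[i] ((fun w : R => b * w)^[i] u * b)) := by
          rw [h1]
      _ = (fun w : R => u * w)^[(j-i) + i] ((fun w : R => b * w)^[i] u * b) :=
          (Function.iterate_add_apply _ _ _ _).symm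
      _ = (fun w : R => u * w)^[j] ((fun w : R => b * w)^[i] u * b) := by
          congr 1
          omega
      _ = (fun w : R => u * w)^[i] ((fun w : R => b * w)^[i] u * b) := by rw [hEq]
      _ = 1 := h1
  rcases lt_or_gt_of_ne hij with h | h
  · exact main i j h hF
  · exact main j i h hF.symm

lemma rcan_of_pw (hBol : ∀ x y z : R, ((x * y) * z) * y = x * ((y * z) * y))
    {u : R} {M : ℕ} (hM : 0 < M) (hpw : pw u M = 1) :
    ∀ s t : R, s * u = t * u → s = t := by
  obtain ⟨m, rfl⟩ : ∃ m, M = m + 1 := ⟨M - 1, by omega⟩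
  have rep : ∀ w : R, w = (fun w : R => w * u)^[m] (w * u) := by
    intro w
    have h := mul_pw_eq_iter hBol u (m+1) w
    rw [hpw, mul_one] at h
    rw [Function.iterate_succ_apply] at h
    exact h
  intro s t hst
  rw [rep s, rep t, hst]

lemma rsurj_of_pw (hBol : ∀ x y z : R, ((x * y) * z) * y = x * ((y * z) * y))
    {u : R} {M : ℕ} (hM : 0 < M) (hpw : pw u M = 1) :
    ∀ w : R, ∃ s : R, s * u = w := by
  obtain ⟨m, rfl⟩ : ∃ m, M = m + 1 := ⟨M - 1, by omega⟩
  intro w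
  refine ⟨(fun w : R => w * u)^[m] w, ?_⟩
  have h := mul_pw_eq_iter hBol u (m+1) w
  rw [hpw, mul_one] at h
  rw [Function.iterate_succ_apply'] at h
  exact h.symm

lemma lcan_of_unit (hBol : ∀ x y z : R, ((x * y) * z) * y = x * ((y * z) * y))
    {u : R} (rcan : ∀ s t : R, s * u = t * u → s = t)
    (rsurj : ∀ w : R, ∃ s : R, s * u = w) :
    ∀ s t : R, u * s = u * t → s = t := by
  intro s t h
  have key : ∀ z : R, z * s = z * t := by
    intro z
    obtain ⟨w, rfl⟩ := rsurj z
    apply rcan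
    rw [hBol w u s, hBol w u t, h]
  have h1 := key 1
  rwa [one_mul, one_mul] at h1

lemma unit_of_lcan [Finite R]
    (hBol : ∀ x y z : R, ((x * y) * z) * y = x * ((y * z) * y))
    {x : R} (lcan : ∀ s t : R, x * s = x * t → s = t) :
    ∃ e : R, x * e = 1 ∧ e * x = 1 := by
  have hinj : Function.Injective (fun w : R => x * w) := fun s t h => lcan s t h
  have hsurj : Function.Surjective (fun w : R => x * w) :=
    Finite.injective_iff_surjective.mp hinj
  obtain ⟨i, j, hij, hF⟩ :=
    Finite.exists_ne_map_eq_of_infinite (fun k : ℕ => (fun w : R => x * w)^[k])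
  have main : ∀ i j : ℕ, i < j → (fun w : R => x * w)^[i] = (fun w : R => x * w)^[j] →
      ∃ e : R, x * e = 1 ∧ e * x = 1 := by
    intro i j hlt hEq
    obtain ⟨t, ht⟩ := (hsurj.iterate i) 1
    have hpw : pw x (j - i) = 1 := by
      calc pw x (j-i) = (fun w : R => x * w)^[j-i] 1 := (lmap_iter_one hBol x _).symm
        _ = (fun w : R => x * w)^[j-i] ((fun w : R => x * w)^[i] t) := by rw [ht]
        _ = (fun w : R => x * w)^[(j-i) + i] t := (Function.iterate_add_apply _ _ _ _).symm
        _ = (fun w : R => x * w)^[j] t := by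
            congr 1
            omega
        _ = (fun w : R => x * w)^[i] t := by rw [hEq]
        _ = 1 := ht
    obtain ⟨m, hm⟩ : ∃ m, j - i = m + 1 := ⟨j - i - 1, by omega⟩
    refine ⟨pw x m, ?_, ?_⟩
    · rw [mul_pw hBol x m, ← hm]
      exact hpw
    · rw [← pw_succ, ← hm]
      exact hpw
  rcases lt_or_gt_of_ne hij with h | h
  · exact main i j h hF
  · exact main j i h hF.symm

lemma unit_of_rcan [Finite R]
    (hBol : ∀ x y z : R, ((x * y) * z) * y = x * ((y * z) * y))
    {x : R} (rcan : ∀ s t : R, s * x = t * x → s = t) :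
    ∃ e : R, x * e = 1 ∧ e * x = 1 := by
  have hinj : Function.Injective (fun w : R => w * x) := fun s t h => rcan s t h
  have hsurj : Function.Surjective (fun w : R => w * x) :=
    Finite.injective_iff_surjective.mp hinj
  have rsurj : ∀ w : R, ∃ s : R, s * x = w := fun w => hsurj w
  exact unit_of_lcan hBol (lcan_of_unit hBol rcan rsurj)

lemma unit_props [Finite R]
    (hBol : ∀ x y z : R, ((x * y) * z) * y = x * ((y * z) * y))
    {u b : R} (hub : u * b = 1) :
    (∀ s t : R, s * u = t * u → s = t) ∧ (∀ w : R, ∃ s : R, s * u = w) ∧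
    (∀ s t : R, u * s = u * t → s = t) ∧ (∀ w : R, ∃ s : R, u * s = w) := by
  obtain ⟨M, hM, hpw⟩ := exists_pw_eq_one hBol hub
  have rcan := rcan_of_pw hBol hM hpw
  have rsurj := rsurj_of_pw hBol hM hpw
  have lcan := lcan_of_unit hBol rcan rsurj
  have lsurj : Function.Surjective (fun w : R => u * w) :=
    Finite.injective_iff_surjective.mp (fun s t h => lcan s t h)
  exact ⟨rcan, rsurj, lcan, fun w => lsurj w⟩

lemma unit_mul [Finite R]
    (hBol : ∀ x y z : R, ((x * y) * z) * y = x * ((y * z) * y))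
    {u v : R} (hu : ∃ b : R, u * b = 1 ∧ b * u = 1) (hv : ∃ b : R, v * b = 1 ∧ b * v = 1) :
    ∃ e : R, (u * v) * e = 1 ∧ e * (u * v) = 1 := by
  obtain ⟨bu, hu1, -⟩ := hu
  obtain ⟨bv, hv1, -⟩ := hv
  obtain ⟨-, -, lcanu, -⟩ := unit_props hBol hu1
  obtain ⟨rcanv, -, lcanv, -⟩ := unit_props hBol hv1
  apply unit_of_lcan hBol
  intro s t h
  apply lcanv
  apply rcanv
  apply lcanu
  rw [← hBol u v s, ← hBol u v t, h]

end SRAUnits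

open SRAUnits in
theorem finite_sra_ring_units_bol_loop {R : Type*} [NonAssocRing R] [Finite R]
    (hBol : ∀ x y z : R, ((x * y) * z) * y = x * ((y * z) * y))
    (U : Set R) (hU : U = {a : R | ∃ b : R, a * b = 1 ∧ b * a = 1}) :
    (∀ a ∈ U, ∀ b ∈ U, a * b ∈ U) ∧
      (1 : R) ∈ U ∧
      (∀ a ∈ U, ∀ b ∈ U, ∃! x : R, x ∈ U ∧ a * x = b) ∧
      (∀ a ∈ U, ∀ b ∈ U, ∃! y : R, y ∈ U ∧ y * a = b) ∧
      (∀ x ∈ U, ∀ y ∈ U, ∀ z ∈ U, ((x * y) * z) * y = x * ((y * z) * y)) := by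
  subst hU
  refine ⟨?_, ?_, ?_, ?_, ?_⟩
  · -- closure
    intro a ha b hb
    exact unit_mul hBol ha hb
  · exact ⟨1, one_mul 1, one_mul 1⟩
  · -- left division
    intro a ha b hb
    obtain ⟨ba, hba1, hba2⟩ := ha
    obtain ⟨rcana, rsurja, lcana, lsurja⟩ := unit_props hBol hba1
    obtain ⟨x, hax⟩ := lsurja b
    -- b*a is a unit
    obtain ⟨e, he1, he2⟩ := unit_mul hBol hb ⟨ba, hba1, hba2⟩
    obtain ⟨rcanba, -, -, -⟩ := unit_props hBol he1
    have rcanx : ∀ s t : R, s * x = t * x → s = t := by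
      intro s t hst
      obtain ⟨s1, rfl⟩ := rsurja s
      obtain ⟨t1, rfl⟩ := rsurja t
      have h2 : ((s1 * a) * x) * a = ((t1 * a) * x) * a := by rw [hst]
      rw [hBol s1 a x, hBol t1 a x, hax] at h2
      rw [rcanba _ _ h2]
    obtain ⟨e2, he21, he22⟩ := unit_of_rcan hBol rcanx
    refine ⟨x, ⟨⟨e2, he21, he22⟩, hax⟩, ?_⟩
    rintro y ⟨-, hay⟩
    exact lcana y x (by rw [hax, hay])
  · -- right division
    intro a ha b hb
    obtain ⟨ba, hba1, hba2⟩ := ha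
    obtain ⟨M, hM, hpw⟩ := exists_pw_eq_one hBol hba1
    obtain ⟨m, rfl⟩ : ∃ m, M = m + 1 := ⟨M - 1, by omega⟩
    have hpwU : ∃ e : R, pw a m * e = 1 ∧ e * pw a m = 1 := by
      refine ⟨a, ?_, ?_⟩
      · rw [← pw_succ]; exact hpw
      · rw [mul_pw hBol a m]; exact hpw
    have hyU := unit_mul hBol hb hpwU
    have hyx : (b * pw a m) * a = b := by
      have h := mul_pw_eq_iter hBol a (m+1) b
      rw [hpw, mul_one] at h
      rw [Function.iterate_succ_apply'] at h
      rw [mul_pw_eq_iter hBol a m b]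
      exact h.symm
    refine ⟨b * pw a m, ⟨hyU, hyx⟩, ?_⟩
    rintro y ⟨-, hya⟩
    obtain ⟨rcana, -, -, -⟩ := unit_props hBol hba1
    exact rcana y (b * pw a m) (by rw [hya, hyx])
  · intro x _ y _ z _
    exact hBol x y z
end

section
/- Let R be a finite strongly right alternative ring. Define the circle operation x ∘ y = x + y + x·y. Then the set Q(R) of quasiregular elements (x such that some x' satisfies x ∘ x' = x' ∘ x = 0) is closed under ∘ and (Q(R), ∘) is a Bol loop with neutral element 0. -/
set_option linter.unusedSectionVars false

namespace SRARBolAux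

variable {R : Type*} [NonUnitalNonAssocRing R]

/-- The circle operation `x ∘ y = x + y + x·y`. -/
def cir (x y : R) : R := x + y + x * y

lemma cir_zero (x : R) : cir x 0 = x := by simp [cir]
lemma zero_cir (x : R) : cir 0 x = x := by simp [cir]

/-- Right circle translation. -/
def rt (c : R) : R → R := fun x => cir x c
lemma rt_apply (c x : R) : rt c x = cir x c := rfl

lemma linRA (hRA : ∀ x y : R, (x * y) * y = x * (y * y)) (x y z : R) :
    (x*y)*z + (x*z)*y = x*(y*z) + x*(z*y) := by
  have h : (x*y)*y + (x*y)*z + ((x*z)*y + (x*z)*z)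
      = x*(y*y) + x*(y*z) + (x*(z*y) + x*(z*z)) := by
    calc (x*y)*y + (x*y)*z + ((x*z)*y + (x*z)*z)
        = (x*(y+z))*(y+z) := by simp only [mul_add, add_mul]; abel
      _ = x*((y+z)*(y+z)) := hRA x (y+z)
      _ = x*(y*y) + x*(y*z) + (x*(z*y) + x*(z*z)) := by
          simp only [mul_add, add_mul]; abel
  calc (x*y)*z + (x*z)*y
      = ((x*y)*y + (x*y)*z + ((x*z)*y + (x*z)*z)) - ((x*y)*y + (x*z)*z) := by abel
    _ = (x*(y*y) + x*(y*z) + (x*(z*y) + x*(z*z))) - ((x*y)*y + (x*z)*z) := by rw [h]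
    _ = (x*(y*y) + x*(y*z) + (x*(z*y) + x*(z*z))) - (x*(y*y) + x*(z*z)) := by
        rw [hRA x y, hRA x z]
    _ = x*(y*z) + x*(z*y) := by abel

lemma cirRA (hRA : ∀ x y : R, (x * y) * y = x * (y * y)) (x y : R) :
    cir (cir x y) y = cir x (cir y y) := by
  simp only [cir, mul_add, add_mul]
  rw [hRA x y]
  abel

lemma cirBol (hRA : ∀ x y : R, (x * y) * y = x * (y * y))
    (hBol : ∀ x y z : R, ((x * y) * z) * y = x * ((y * z) * y)) (x y z : R) :
    cir (cir (cir x y) z) y = cir x (cir (cir y z) y) := by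
  calc cir (cir (cir x y) z) y
      = (((x*y)*z + (x*z)*y) - (x*(y*z) + x*(z*y)))
        + ((x*y)*y - x*(y*y)) + (((x*y)*z)*y - x*((y*z)*y))
        + cir x (cir (cir y z) y) := by
        simp only [cir, mul_add, add_mul]; abel
    _ = cir x (cir (cir y z) y) := by
        rw [linRA hRA x y z, hRA x y, hBol x y z]; abel

section
variable (hRA : ∀ x y : R, (x * y) * y = x * (y * y))
  (hBol : ∀ x y z : R, ((x * y) * z) * y = x * ((y * z) * y))

include hRA hBol in
/-- Right inverse property: if `a ∘ a' = a' ∘ a = 0` then `(x ∘ a) ∘ a' = x`. -/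
lemma rip (a a' : R) (ha : cir a a' = 0) (ha' : cir a' a = 0) (x : R) :
    cir (cir x a) a' = x := by
  have hX : cir (cir x a) a' = x + (cir (cir x a) a' - x) := by abel
  set e := cir (cir x a) a' - x with he
  have h1 : cir (cir (cir x a) a') a = cir x a := by
    rw [cirBol hRA hBol x a a', ha, zero_cir]
  rw [hX] at h1
  have hea : e + e * a = 0 := by
    calc e + e * a = cir (x + e) a - cir x a := by simp only [cir, add_mul]; abel
      _ = 0 := by rw [h1]; exact sub_self _
  have he2 : cir e a = a := by
    have : cir e a = a + (e + e * a) := by simp only [cir]; abel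
    rw [this, hea, add_zero]
  have ha'' : cir a (cir a' a') = a' := by
    rw [← cirRA hRA a a', ha, zero_cir]
  have hfin := cirBol hRA hBol e a (cir a' a')
  rw [he2, ha'', ha', cir_zero] at hfin
  rw [hX, ← hfin, add_zero]

include hRA hBol in
lemma lsurj (a a' : R) (ha : cir a a' = 0) (ha' : cir a' a = 0) :
    Function.Surjective (fun z : R => cir a z) := by
  intro τ
  refine ⟨cir (cir a' (cir τ a)) a', ?_⟩
  have key := cirBol hRA hBol a a' (cir τ a)
  rw [ha, zero_cir] at key
  show cir a (cir (cir a' (cir τ a)) a') = τ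
  rw [← key]
  exact rip hRA hBol a a' ha ha' τ

variable [Finite R]

include hRA hBol in
lemma exists_qinv_of_inj (c : R) (hinj : Function.Injective (rt c)) :
    ∃ c', cir c c' = 0 ∧ cir c' c = 0 := by
  have hpow : ∀ k, ∀ x : R, (rt c)^[k] x = cir x ((rt c)^[k] 0) := by
    have main : ∀ k, (∀ x : R, (rt c)^[k] x = cir x ((rt c)^[k] 0)) ∧
        (∀ x : R, (rt c)^[k+1] x = cir x ((rt c)^[k+1] 0)) := by
      intro k
      induction k with
      | zero =>
        constructor
        · intro x
          simp only [Function.iterate_zero, id_eq, cir_zero]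
        · intro x
          simp only [zero_add, Function.iterate_one, rt_apply, zero_cir]
      | succ n ih =>
        refine ⟨ih.2, ?_⟩
        have key : ∀ z : R, (rt c)^[n+1+1] z = cir z (cir (cir c ((rt c)^[n] 0)) c) := by
          intro z
          have e1 : (rt c)^[n+1+1] z = rt c ((rt c)^[n] (rt c z)) := by
            rw [Function.iterate_succ_apply, Function.iterate_succ_apply']
          rw [e1, ih.1 (rt c z)]
          show cir (cir (cir z c) ((rt c)^[n] 0)) c = _
          exact cirBol hRA hBol z c ((rt c)^[n] 0)
        have e0 : (rt c)^[n+1+1] 0 = cir (cir c ((rt c)^[n] 0)) c := by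
          rw [key 0, zero_cir]
        intro x
        rw [key x, ← e0]
    exact fun k => (main k).1
  obtain ⟨i, j, hne, he⟩ :=
    Finite.exists_ne_map_eq_of_infinite (fun n : ℕ => (rt c)^[n])
  have cancel : ∀ p q : ℕ, p < q → (rt c)^[p] = (rt c)^[q] → ∀ x, (rt c)^[q - p] x = x := by
    intro p q hpq heq x
    have hinjp : Function.Injective ((rt c)^[p]) := hinj.iterate p
    apply hinjp
    have h2 : (rt c)^[p] ((rt c)^[q-p] x) = (rt c)^[p + (q - p)] x :=
      (Function.iterate_add_apply _ p (q-p) x).symm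
    rw [h2, Nat.add_sub_cancel' hpq.le, ← heq]
  have final : ∀ p q : ℕ, p < q → (rt c)^[p] = (rt c)^[q] →
      ∃ c', cir c c' = 0 ∧ cir c' c = 0 := by
    intro p q hpq heq
    set n := q - p with hn
    have hnpos : 0 < n := Nat.sub_pos_of_lt hpq
    have hid : ∀ x, (rt c)^[n] x = x := cancel p q hpq heq
    have hn1 : n - 1 + 1 = n := Nat.succ_pred_eq_of_pos hnpos
    refine ⟨(rt c)^[n-1] 0, ?_, ?_⟩
    · have h1 := hpow (n-1) c
      rw [← h1]
      have h2 : (rt c)^[n-1] c = (rt c)^[n] 0 := by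
        rw [← hn1, Function.iterate_succ_apply]
        exact congrArg ((rt c)^[n-1]) (by rw [rt_apply, zero_cir])
      rw [h2, hid 0]
    · have h3 := Function.iterate_succ_apply' (rt c) (n-1) (0 : R)
      rw [Nat.succ_eq_add_one, hn1] at h3
      rw [← rt_apply, ← h3, hid 0]
  rcases Nat.lt_trichotomy i j with h | h | h
  · exact final i j h he
  · exact absurd h hne
  · exact final j i h he.symm

include hRA hBol in
lemma closure (a a' b b' : R) (ha : cir a a' = 0) (ha' : cir a' a = 0)
    (hb : cir b b' = 0) (hb' : cir b' b = 0) :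
    ∃ c', cir (cir a b) c' = 0 ∧ cir c' (cir a b) = 0 := by
  set c := cir a b with hc
  have Rb_l : ∀ x : R, cir (cir x b) b' = x := rip hRA hBol b b' hb hb'
  have Rb_r : ∀ x : R, cir (cir x b') b = x := rip hRA hBol b' b hb' hb
  have La_surj := lsurj hRA hBol a a' ha ha'
  have Lb_surj := lsurj hRA hBol b b' hb hb'
  have lam_surj : ∀ r : R, ∃ z, z + c * z = r := by
    intro r
    obtain ⟨σ, hσ⟩ := La_surj (cir (c + r) b)
    obtain ⟨ω, hω⟩ := Lb_surj (cir σ b')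
    simp only at hσ hω
    have key := cirBol hRA hBol a b ω
    rw [hω, Rb_r σ, hσ, ← hc] at key
    have h2 : cir (cir (cir c ω) b) b' = cir (cir (c+r) b) b' := by rw [key]
    rw [Rb_l (cir c ω), Rb_l (c+r)] at h2
    refine ⟨ω, ?_⟩
    calc ω + c * ω = cir c ω - c := by simp only [cir]; abel
      _ = (c + r) - c := by rw [h2]
      _ = r := by abel
  have hker : ∀ x₀ : R, x₀ + x₀ * c = 0 → x₀ = 0 := by
    intro x₀ h0
    have hxc : x₀ * c = -x₀ := eq_neg_of_add_eq_zero_right h0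
    have A2 : ∀ r : R, x₀ * (r + r * c) = 0 := by
      intro r
      obtain ⟨z, hz⟩ := lam_surj r
      rw [← hz]
      have l1 := linRA hRA x₀ c z
      rw [hxc] at l1
      have l1' : -(x₀ * z) + (x₀ * z) * c = x₀ * (c * z) + x₀ * (z * c) := by
        rw [← l1]; simp [neg_mul]
      have l2 := hBol x₀ c z
      rw [hxc] at l2
      have l2' : -((x₀ * z) * c) = x₀ * ((c * z) * c) := by
        rw [← l2]; simp [neg_mul]
      calc x₀ * ((z + c*z) + (z + c*z) * c)
          = x₀*z + (x₀*(c*z) + x₀*(z*c)) + x₀*((c*z)*c) := by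
            simp only [mul_add, add_mul]; abel
        _ = x₀*z + (-(x₀ * z) + (x₀ * z) * c) + -((x₀ * z) * c) := by rw [← l1', ← l2']
        _ = 0 := by abel
    have B1 : ∀ t : R, (x₀ * t) * c = x₀ * (c * t) := by
      intro t
      have l1 := linRA hRA x₀ t c
      rw [hxc] at l1
      have l1' : (x₀*t)*c + -(x₀*t) = x₀*(t*c) + x₀*(c*t) := by
        rw [← l1]; simp [neg_mul]
      have l3 : x₀*t + x₀*(t*c) = 0 := by
        have := A2 t; rwa [mul_add] at this
      calc (x₀*t)*c = ((x₀*t)*c + -(x₀*t)) + x₀*t := by abel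
        _ = (x₀*(t*c) + x₀*(c*t)) + x₀*t := by rw [l1']
        _ = (x₀*t + x₀*(t*c)) + x₀*(c*t) := by abel
        _ = 0 + x₀*(c*t) := by rw [l3]
        _ = x₀*(c*t) := by rw [zero_add]
    set T : Set R := insert x₀ (Set.range fun r : R => x₀ * r) with hT
    set S : AddSubgroup R := AddSubgroup.closure T with hS
    have hx₀S : x₀ ∈ S := AddSubgroup.subset_closure (Set.mem_insert _ _)
    have hmulS : ∀ r : R, x₀ * r ∈ S := fun r =>
      AddSubgroup.subset_closure (Set.mem_insert_iff.mpr (Or.inr ⟨r, rfl⟩))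
    let g : R →+ R :=
      { toFun := fun y => y + y * c
        map_zero' := by simp
        map_add' := fun p q => by simp only [add_mul]; abel }
    have g_apply : ∀ y : R, g y = y + y * c := fun y => rfl
    have hg_x₀ : g x₀ = 0 := h0
    have hg_mul : ∀ r : R, g (x₀ * r) = x₀ * (r + c * r) := by
      intro r
      rw [g_apply, B1 r, ← mul_add]
    have mapsTo : ∀ y, y ∈ S → g y ∈ S := by
      have hsub : T ⊆ (AddSubgroup.comap g S : Set R) := by
        intro w hw
        rcases hw with hw1 | ⟨r, hw2⟩
        · rw [hw1]
          simp only [SetLike.mem_coe, AddSubgroup.mem_comap, hg_x₀]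
          exact S.zero_mem
        · rw [← hw2]
          simp only [SetLike.mem_coe, AddSubgroup.mem_comap, hg_mul]
          exact hmulS _
      have hle : S ≤ AddSubgroup.comap g S := by
        rw [hS]; exact AddSubgroup.closure_le _ |>.mpr hsub
      intro y hy
      exact (AddSubgroup.mem_comap).mp (hle hy)
    have surjOn : ∀ y, y ∈ S → ∃ x, x ∈ S ∧ g x = y := by
      have hsub : T ⊆ (AddSubgroup.map g S : Set R) := by
        intro w hw
        rcases hw with hw1 | ⟨r, hw2⟩
        · rw [hw1]
          obtain ⟨z, hz⟩ := lam_surj (-c)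
          refine ⟨x₀ * z, hmulS z, ?_⟩
          rw [hg_mul, hz, mul_neg, hxc, neg_neg]
        · rw [← hw2]
          obtain ⟨z, hz⟩ := lam_surj r
          exact ⟨x₀ * z, hmulS z, by rw [hg_mul, hz]⟩
      have hle : S ≤ AddSubgroup.map g S := by
        rw [hS]; exact AddSubgroup.closure_le _ |>.mpr hsub
      intro y hy
      obtain ⟨x, hxS, hgx⟩ := hle hy
      exact ⟨x, hxS, hgx⟩
    let F : S → S := fun y => ⟨g y, mapsTo y y.2⟩
    have Fsurj : Function.Surjective F := by
      rintro ⟨y, hy⟩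
      obtain ⟨x, hxS, hgx⟩ := surjOn y hy
      exact ⟨⟨x, hxS⟩, Subtype.ext hgx⟩
    have Finj : Function.Injective F := (Finite.injective_iff_surjective).mpr Fsurj
    have hFeq : F ⟨x₀, hx₀S⟩ = F ⟨0, S.zero_mem⟩ := by
      apply Subtype.ext
      show g x₀ = g 0
      rw [hg_x₀, map_zero]
    exact congrArg Subtype.val (Finj hFeq)
  have hinj : Function.Injective (rt c) := by
    intro x y hxy
    rw [rt_apply, rt_apply] at hxy
    have h2 : (x - y) + (x - y) * c = 0 := by
      calc (x - y) + (x - y) * c = cir x c - cir y c := by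
            simp only [cir, sub_mul]; abel
        _ = 0 := by rw [hxy]; exact sub_self _
    exact sub_eq_zero.mp (hker _ h2)
  exact exists_qinv_of_inj hRA hBol c hinj

end
end SRARBolAux
open SRARBolAux in
theorem finite_sra_ring_quasiregular_bol_loop {R : Type*} [NonUnitalNonAssocRing R]
    [Finite R]
    (hRA : ∀ x y : R, (x * y) * y = x * (y * y))
    (hBol : ∀ x y z : R, ((x * y) * z) * y = x * ((y * z) * y))
    (circ : R → R → R) (hcirc : ∀ x y : R, circ x y = x + y + x * y)
    (Q : Set R) (hQ : Q = {x : R | ∃ x' : R, circ x x' = 0 ∧ circ x' x = 0}) :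
    (∀ a ∈ Q, ∀ b ∈ Q, circ a b ∈ Q) ∧
      (0 : R) ∈ Q ∧
      (∀ x : R, circ 0 x = x ∧ circ x 0 = x) ∧
      (∀ a ∈ Q, ∀ b ∈ Q, ∃! x : R, x ∈ Q ∧ circ a x = b) ∧
      (∀ a ∈ Q, ∀ b ∈ Q, ∃! y : R, y ∈ Q ∧ circ y a = b) ∧
      (∀ x ∈ Q, ∀ y ∈ Q, ∀ z ∈ Q,
        circ (circ (circ x y) z) y = circ x (circ (circ y z) y)) := by
  have hce : ∀ x y : R, circ x y = cir x y := fun x y => by rw [hcirc]; rfl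
  have hQmem : ∀ x : R, x ∈ Q ↔ ∃ x' : R, cir x x' = 0 ∧ cir x' x = 0 := by
    intro x
    rw [hQ]
    simp only [Set.mem_setOf_eq, hce]
  -- closure, stated once
  have hclos : ∀ a ∈ Q, ∀ b ∈ Q, ∃ c' : R, cir (cir a b) c' = 0 ∧ cir c' (cir a b) = 0 := by
    intro a ha b hb
    obtain ⟨a', ha1, ha2⟩ := (hQmem a).mp ha
    obtain ⟨b', hb1, hb2⟩ := (hQmem b).mp hb
    exact closure hRA hBol a a' b b' ha1 ha2 hb1 hb2
  refine ⟨?_, ?_, ?_, ?_, ?_, ?_⟩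
  · -- closure
    intro a ha b hb
    rw [hQmem, hce a b]
    exact hclos a ha b hb
  · -- 0 ∈ Q
    exact (hQmem 0).mpr ⟨0, zero_cir 0, zero_cir 0⟩
  · -- identity
    intro x
    rw [hce, hce]
    exact ⟨zero_cir x, cir_zero x⟩
  · -- left division
    intro a ha b hb
    obtain ⟨a', ha1, ha2⟩ := (hQmem a).mp ha
    obtain ⟨x, hx⟩ := lsurj hRA hBol a a' ha1 ha2 b
    simp only at hx
    obtain ⟨q', hq1, hq2⟩ := hclos b hb a ha
    have key : ∀ σ : R, cir (cir σ x) a = cir (cir σ a') (cir b a) := by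
      intro σ
      have B := cirBol hRA hBol (cir σ a') a x
      rw [rip hRA hBol a' a ha2 ha1 σ, hx] at B
      exact B
    have hxinj : Function.Injective (rt x) := by
      intro σ₁ σ₂ h12
      rw [rt_apply, rt_apply] at h12
      have k1 := key σ₁
      rw [h12, key σ₂] at k1
      have k2 : cir (cir (cir σ₁ a') (cir b a)) q' = cir (cir (cir σ₂ a') (cir b a)) q' := by
        rw [k1]
      rw [rip hRA hBol (cir b a) q' hq1 hq2 (cir σ₁ a'),
        rip hRA hBol (cir b a) q' hq1 hq2 (cir σ₂ a')] at k2
      have k3 : cir (cir σ₁ a') a = cir (cir σ₂ a') a := by rw [k2]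
      rw [rip hRA hBol a' a ha2 ha1 σ₁, rip hRA hBol a' a ha2 ha1 σ₂] at k3
      exact k3
    refine ⟨x, ⟨(hQmem x).mpr (exists_qinv_of_inj hRA hBol x hxinj), by rw [hce]; exact hx⟩, ?_⟩
    rintro y ⟨hyQ, hy⟩
    have Lainj : Function.Injective (fun z : R => cir a z) :=
      (Finite.injective_iff_surjective).mpr (lsurj hRA hBol a a' ha1 ha2)
    apply Lainj
    show cir a y = cir a x
    rw [hx, ← hce]
    exact hy
  · -- right division
    intro a ha b hb
    obtain ⟨a', ha1, ha2⟩ := (hQmem a).mp ha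
    have ha'Q : a' ∈ Q := (hQmem a').mpr ⟨a, ha2, ha1⟩
    refine ⟨cir b a', ⟨(hQmem _).mpr (hclos b hb a' ha'Q), ?_⟩, ?_⟩
    · rw [hce]
      exact rip hRA hBol a' a ha2 ha1 b
    · rintro y ⟨hyQ, hy⟩
      rw [hce] at hy
      calc y = cir (cir y a) a' := (rip hRA hBol a a' ha1 ha2 y).symm
        _ = cir b a' := by rw [hy]
  · -- Bol identity
    intro x _ y _ z _
    simp only [hce]
    exact cirBol hRA hBol x y z
end

section
/- In a right Bol magma L with neutral element, if a has a two-sided inverse a⁻¹, then R(a)∘R((a⁻¹)²)∘R(a) is the identity map, i.e., ((x·a)·(a⁻¹)²)·a = x for all x ∈ L, where (a⁻¹)² = a⁻¹·a⁻¹. -/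
theorem bol_RaRcRa_identity {L : Type*} [Mul L] [One L]
    (hBol : ∀ x y z : L, ((x * y) * z) * y = x * ((y * z) * y))
    (hone : ∀ x : L, 1 * x = x ∧ x * 1 = x)
    (a b : L) (hab : a * b = 1) (hba : b * a = 1) :
    ∀ x : L, ((x * a) * (b * b)) * a = x := by
  have habb : a * (b * b) = b := by
    have h := hBol a b 1
    rw [hab, (hone 1).1, (hone b).1, (hone b).2] at h
    exact h.symm
  intro x
  rw [hBol x a (b * b), habb, hba, (hone x).2]
end
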